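/- The function ξ(p) = √p · (2/(2−p))^{1/2 − 1/p} is strictly increasing on the interval (0, 1], satisfies ξ(1) = 1/√2, and tends to 0 as p → 0⁺. -/

import Mathlib

open scoped Classical

noncomputable def l2norm {n : ℕ} (v : Fin n → ℂ) : ℝ :=
  Real.sqrt (∑ i, ‖v i‖ ^ 2)

noncomputable def l1norm {n : ℕ} (v : Fin n → ℂ) : ℝ :=
  ∑ i, ‖v i‖

noncomputable def lpPow {n : ℕ} (p : ℝ) (v : Fin n → ℂ) : ℝ :=
  ∑ i, ‖v i‖ ^ p

noncomputable def lpnorm {n : ℕ} (p : ℝ) (v : Fin n → ℂ) : ℝ :=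
  (∑ i, ‖v i‖ ^ p) ^ (1/p)

noncomputable def Fball {n : ℕ} (p c : ℝ) : Set (Fin n → ℂ) :=
  {x | ∑ i, ‖x i‖ ^ p ≤ c}

def IsProj {n : ℕ} (p c : ℝ) (x xp : Fin n → ℂ) : Prop :=
  xp ∈ Fball p c ∧ ∀ u ∈ Fball p c, l2norm (x - xp) ≤ l2norm (x - u)

def Sparse {n : ℕ} (t : ℕ) (v : Fin n → ℂ) : Prop :=
  (Finset.univ.filter fun i => v i ≠ 0).card ≤ t

noncomputable def herm {n : ℕ} (u v : Fin n → ℂ) : ℂ :=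
  ∑ i, (starRingEnd ℂ) (u i) * v i

noncomputable def restrict {n : ℕ} (I : Finset (Fin n)) (d : Fin n → ℂ) : Fin n → ℂ :=
  fun i => if i ∈ I then d i else 0

noncomputable def xi (p : ℝ) : ℝ :=
  Real.sqrt p * (2 / (2 - p)) ^ ((1 : ℝ) / 2 - 1 / p)

/-!
On `(0, 2)` we have `log ξ(p) = ½ log p + (½ - 1/p) (log 2 - log (2 - p))`, whose derivative
simplifies to `(log 2 - log (2 - p)) / p²`, positive because `2 - p < 2`; so `ξ` is strictly
increasing on all of `(0, 2)`. For `p ≤ 1` the exponent `½ - 1/p` is nonpositive while the base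
`2 / (2 - p)` is at least `1`, so `0 < ξ(p) ≤ √p → 0`.
-/

open Real Set Filter Topology

noncomputable def logXi (p : ℝ) : ℝ :=
  1 / 2 * log p + (1 / 2 - 1 / p) * (log 2 - log (2 - p))

lemma xi_eq_exp_logXi {p : ℝ} (hp : 0 < p) (hp2 : p < 2) : xi p = exp (logXi p) := by
  have h2p : 0 < 2 - p := by linarith
  rw [xi, logXi, exp_add, sqrt_eq_rpow, rpow_def_of_pos hp, rpow_def_of_pos (by positivity),
    log_div two_ne_zero h2p.ne']
  ring_nf

lemma hasDerivAt_logXi {p : ℝ} (hp : 0 < p) (hp2 : p < 2) :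
    HasDerivAt logXi ((log 2 - log (2 - p)) / p ^ 2) p := by
  have h2p : 0 < 2 - p := by linarith
  have hlog : HasDerivAt (fun q : ℝ => 1 / 2 * log q) (1 / 2 * p⁻¹) p :=
    (hasDerivAt_log hp.ne').const_mul _
  have hexp : HasDerivAt (fun q : ℝ => 1 / 2 - 1 / q) (p ^ 2)⁻¹ p := by
    simpa [one_div] using (hasDerivAt_inv hp.ne').const_sub (1 / 2 : ℝ)
  have hbase : HasDerivAt (fun q : ℝ => log 2 - log (2 - q)) (2 - p)⁻¹ p := by
    simpa [neg_div] using (((hasDerivAt_id p).const_sub 2).log h2p.ne').const_sub (log 2)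
  refine (hlog.add (hexp.mul hbase)).congr_deriv ?_
  field_simp
  ring

lemma strictMonoOn_logXi : StrictMonoOn logXi (Ioo 0 2) := by
  refine strictMonoOn_of_deriv_pos (convex_Ioo 0 2)
    (fun p hp => (hasDerivAt_logXi hp.1 hp.2).continuousAt.continuousWithinAt) ?_
  intro p hp
  rw [interior_Ioo] at hp
  rw [(hasDerivAt_logXi hp.1 hp.2).deriv]
  have : log (2 - p) < log 2 := log_lt_log (by linarith [hp.2]) (by linarith [hp.1])
  have : 0 < p ^ 2 := pow_pos hp.1 2
  exact div_pos (by linarith) this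

lemma strictMonoOn_xi : StrictMonoOn xi (Ioo 0 2) := by
  intro a ha b hb hab
  rw [xi_eq_exp_logXi ha.1 ha.2, xi_eq_exp_logXi hb.1 hb.2]
  exact exp_lt_exp.mpr (strictMonoOn_logXi ha hb hab)

lemma xi_one : xi 1 = 1 / sqrt 2 := by
  rw [xi]
  norm_num
  rw [rpow_neg zero_le_two, sqrt_eq_rpow]

lemma xi_le_sqrt {p : ℝ} (hp : 0 < p) (hp1 : p ≤ 1) : xi p ≤ sqrt p := by
  have h2p : 0 < 2 - p := by linarith
  have hbase : 1 ≤ 2 / (2 - p) := by rw [le_div_iff₀ h2p]; linarith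
  have hexp : 1 / 2 - 1 / p ≤ 0 := by
    have : 1 ≤ 1 / p := by rw [le_div_iff₀ hp]; linarith
    linarith
  calc xi p ≤ sqrt p * 1 :=
        mul_le_mul_of_nonneg_left (rpow_le_one_of_one_le_of_nonpos hbase hexp) (sqrt_nonneg p)
    _ = sqrt p := mul_one _

lemma tendsto_xi_nhdsGT_zero : Tendsto xi (𝓝[>] 0) (𝓝 0) := by
  have hnear : ∀ᶠ p in 𝓝[>] (0 : ℝ), p ∈ Ioo 0 1 :=
    Ioo_mem_nhdsGT_of_mem ⟨le_rfl, one_pos⟩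
  have hsqrt : Tendsto sqrt (𝓝[>] 0) (𝓝 0) := by
    simpa using (continuous_sqrt.tendsto 0).mono_left nhdsWithin_le_nhds
  refine squeeze_zero' ?_ ?_ hsqrt
  · filter_upwards [hnear] with p hp
    rw [xi_eq_exp_logXi hp.1 (by linarith [hp.2])]
    exact (exp_pos _).le
  · filter_upwards [hnear] with p hp
    exact xi_le_sqrt hp.1 hp.2.le

theorem xi_properties :
    StrictMonoOn xi (Set.Ioc (0 : ℝ) 1) ∧
    xi 1 = 1 / Real.sqrt 2 ∧
    Filter.Tendsto xi (nhdsWithin 0 (Set.Ioi 0)) (nhds 0) :=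
  ⟨strictMonoOn_xi.mono (Ioc_subset_Ioo_right one_lt_two), xi_one, tendsto_xi_nhdsGT_zero⟩
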